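/- arXiv:2202.08209 — 3 statements merged into one kernel-verified Lean document; each statement's English description precedes it below -/
import Mathlib

section
/- A deterministic model c on the EPR scenario satisfies the no-disturbance (ND) condition if and only if it is local deterministic, i.e., there exist functions ε : Fin 2 → Fin 2 and δ : Fin 2 → Fin 2 such that c = {(ε x, δ y, x, y) : x, y ∈ Fin 2}. -/
/-- The vertex set of the EPR (Bell/CHSH) contextuality scenario:
`(a, b, x, y)` records outcomes `a, b` of parties A, B under settings `x, y`. -/
abbrev EPRVertex : Type := Fin 2 × Fin 2 × Fin 2 × Fin 2

/-- The Cartesian edge `e_{x,y} = {(a,b,x,y) : a,b}`. -/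
def cartEdge (x y : Fin 2) : Finset EPRVertex :=
  Finset.univ.filter fun v => v.2.2.1 = x ∧ v.2.2.2 = y

/-- A→B measurement-protocol edge `E^{AB}_{x,f} = {(a,b,x,f a) : a,b}`. -/
def edgeAB (x : Fin 2) (f : Fin 2 → Fin 2) : Finset EPRVertex :=
  Finset.univ.filter fun v => v.2.2.1 = x ∧ v.2.2.2 = f v.1

/-- B→A measurement-protocol edge `E^{BA}_{y,g} = {(a,b,g b,y) : a,b}`. -/
def edgeBA (y : Fin 2) (g : Fin 2 → Fin 2) : Finset EPRVertex :=
  Finset.univ.filter fun v => v.2.2.2 = y ∧ v.2.2.1 = g v.2.1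

/-- The Foulis–Randall edges of the EPR scenario. -/
def FREdges : Finset (Finset EPRVertex) :=
  (Finset.univ.image fun xy : Fin 2 × Fin 2 => cartEdge xy.1 xy.2) ∪
  (Finset.univ.image fun xf : Fin 2 × (Fin 2 → Fin 2) => edgeAB xf.1 xf.2) ∪
  (Finset.univ.image fun yg : Fin 2 × (Fin 2 → Fin 2) => edgeBA yg.1 yg.2)

/-- `p` is a probabilistic model on the EPR scenario. -/
def IsProbModel (p : EPRVertex → ℝ) : Prop :=
  (∀ v, 0 ≤ p v) ∧ ∀ x y : Fin 2, ∑ a : Fin 2, ∑ b : Fin 2, p (a, b, x, y) = 1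

/-- The no-disturbance (ND) condition. -/
def IsND (p : EPRVertex → ℝ) : Prop :=
  (∀ a x : Fin 2, ∑ b : Fin 2, p (a, b, x, 0) = ∑ b : Fin 2, p (a, b, x, 1)) ∧
  (∀ b y : Fin 2, ∑ a : Fin 2, p (a, b, 0, y) = ∑ a : Fin 2, p (a, b, 1, y))

/-- Indicator function of a finite set of vertices. -/
def indicator (c : Finset EPRVertex) : EPRVertex → ℝ := fun v => if v ∈ c then 1 else 0

/-- A deterministic model: one outcome in each Cartesian edge. -/
def IsDetModel (c : Finset EPRVertex) : Prop :=
  ∀ x y : Fin 2, (c ∩ cartEdge x y).card = 1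

/-- The disturbance `D(c) = Σ_e ||c ∩ e| − 1|` over all Foulis–Randall edges. -/
def disturbance (c : Finset EPRVertex) : ℕ :=
  ∑ e ∈ FREdges, (((c ∩ e).card : ℤ) - 1).natAbs

/-- Correlation of `p` at settings `(x, y)`. -/
def corr (x y : Fin 2) (p : EPRVertex → ℝ) : ℝ :=
  ∑ a : Fin 2, ∑ b : Fin 2, (-1 : ℝ) ^ ((a : ℕ) + (b : ℕ)) * p (a, b, x, y)

/-- The Bell parameter `B(p)`. -/
noncomputable def Bell (p : EPRVertex → ℝ) : ℝ :=
  Finset.univ.sup' Finset.univ_nonempty fun xy : Fin 2 × Fin 2 =>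
    |(∑ x' : Fin 2, ∑ y' : Fin 2, corr x' y' p) - 2 * corr xy.1 xy.2 p|

/-! A deterministic model is the graph of an outcome assignment `f : (x, y) ↦ (a, b)`. Its
A-marginal at settings `(x, y)` is the point mass at `(f x y).1`, and its B-marginal the point mass
at `(f x y).2`; so ND says exactly that A's outcome does not depend on `y` and B's not on `x`,
i.e. `f x y = (ε x, δ y)`. -/

open Finset

def graphModel (f : Fin 2 → Fin 2 → Fin 2 × Fin 2) : Finset EPRVertex :=
  univ.image fun xy : Fin 2 × Fin 2 =>
    ((f xy.1 xy.2).1, (f xy.1 xy.2).2, xy.1, xy.2)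

theorem mem_graphModel {f : Fin 2 → Fin 2 → Fin 2 × Fin 2} {v : EPRVertex} :
    v ∈ graphModel f ↔ f v.2.2.1 v.2.2.2 = (v.1, v.2.1) := by
  constructor
  · intro h
    obtain ⟨xy, -, rfl⟩ := mem_image.mp h
    rfl
  · intro h
    exact mem_image.mpr ⟨(v.2.2.1, v.2.2.2), mem_univ _, by rw [h]⟩

theorem graphModel_injective : Function.Injective graphModel := by
  intro f g h
  funext x y
  have hf : ((f x y).1, (f x y).2, x, y) ∈ graphModel g := h ▸ mem_graphModel.mpr rfl
  exact (mem_graphModel.mp hf).symm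

theorem mem_cartEdge {v : EPRVertex} {x y : Fin 2} :
    v ∈ cartEdge x y ↔ v.2.2.1 = x ∧ v.2.2.2 = y := by
  simp [cartEdge]

theorem IsDetModel.exists_eq_graphModel {c : Finset EPRVertex} (hc : IsDetModel c) :
    ∃ f, c = graphModel f := by
  choose v hv using fun x y => card_eq_one.mp (hc x y)
  have hv_edge (x y : Fin 2) : (v x y).2.2 = (x, y) := by
    have := (mem_inter.mp ((hv x y).symm ▸ mem_singleton_self (v x y))).2
    exact Prod.ext_iff.mpr (mem_cartEdge.mp this)
  refine ⟨fun x y => ((v x y).1, (v x y).2.1), ?_⟩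
  ext ⟨a, b, x, y⟩
  have hw : (a, b, x, y) ∈ c ↔ (a, b, x, y) ∈ c ∩ cartEdge x y := by simp [mem_cartEdge]
  rw [hw, hv, mem_singleton, mem_graphModel]
  have := hv_edge x y
  simp only [Prod.ext_iff] at this ⊢
  grind

theorem forall_ite_eq_ite_iff {α M : Type*} [DecidableEq α] [Zero M] [One M] [NeZero (1 : M)]
    {p q : α} :
    (∀ a, (if p = a then (1 : M) else 0) = if q = a then 1 else 0) ↔ p = q :=
  ⟨fun h => by simpa using h q, by rintro rfl _; rfl⟩

theorem sum_indicator_graphModel_snd (f : Fin 2 → Fin 2 → Fin 2 × Fin 2) (a x y : Fin 2) :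
    ∑ b : Fin 2, indicator (graphModel f) (a, b, x, y) = if (f x y).1 = a then 1 else 0 := by
  simp [indicator, mem_graphModel, Prod.ext_iff, ite_and, eq_comm]

theorem sum_indicator_graphModel_fst (f : Fin 2 → Fin 2 → Fin 2 × Fin 2) (b x y : Fin 2) :
    ∑ a : Fin 2, indicator (graphModel f) (a, b, x, y) = if (f x y).2 = b then 1 else 0 := by
  simp [indicator, mem_graphModel, Prod.ext_iff, ite_and, eq_comm]

theorem isND_indicator_graphModel_iff (f : Fin 2 → Fin 2 → Fin 2 × Fin 2) :
    IsND (indicator (graphModel f)) ↔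
      (∀ x, (f x 0).1 = (f x 1).1) ∧ ∀ y, (f 0 y).2 = (f 1 y).2 := by
  simp only [IsND, sum_indicator_graphModel_snd, sum_indicator_graphModel_fst]
  refine and_congr ?_ ?_ <;> rw [forall_comm] <;> simp only [forall_ite_eq_ite_iff]

theorem exists_eq_prodMk_iff {α β : Type*} (f : Fin 2 → Fin 2 → α × β) :
    (∃ (ε : Fin 2 → α) (δ : Fin 2 → β), f = fun x y => (ε x, δ y)) ↔
      (∀ x, (f x 0).1 = (f x 1).1) ∧ ∀ y, (f 0 y).2 = (f 1 y).2 := by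
  constructor
  · rintro ⟨ε, δ, rfl⟩
    simp
  · rintro ⟨hfst, hsnd⟩
    refine ⟨fun x => (f x 0).1, fun y => (f 0 y).2, funext₂ fun x y => Prod.ext ?_ ?_⟩
    · fin_cases y
      exacts [rfl, (hfst x).symm]
    · fin_cases x
      exacts [rfl, (hsnd y).symm]

/-- a deterministic model on the EPR scenario satisfies the ND condition
iff it is local deterministic, i.e. `c = {(ε x, δ y, x, y) : x, y}` for some `ε, δ`. -/
theorem detModel_nd_iff_localDeterministic (c : Finset EPRVertex) (hc : IsDetModel c) :
    IsND (indicator c) ↔ ∃ ε δ : Fin 2 → Fin 2,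
      c = Finset.univ.image fun xy : Fin 2 × Fin 2 => (ε xy.1, δ xy.2, xy.1, xy.2) := by
  obtain ⟨f, rfl⟩ := hc.exists_eq_graphModel
  rw [isND_indicator_graphModel_iff, ← exists_eq_prodMk_iff]
  exact exists₂_congr fun ε δ =>
    (graphModel_injective.eq_iff (b := fun x y => (ε x, δ y))).symm
end

section
/- Let p be a probabilistic model on the EPR scenario that is a convex combination p = Σ_c q_c · 1_c of indicators of deterministic models (the sum ranging over all deterministic models, q_c ≥ 0, Σ_c q_c = 1). Then B(p) ≤ 2 + Σ_c q_c · D(c); that is, the Bell parameter minus the total weighted disturbance of the decomposition never exceeds the classical bound B₀ = 2. -/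
/-!
The correlations, hence every CHSH expression, are linear in `p`, so it suffices to bound
`|CHSH|` for a single deterministic model `c` by `2 + D(c)`. Such a model is the graph of outcome
functions `a x y`, `b x y`. If A's outcome `a x ·` depends on B's setting, it is a bijection of
`Fin 2`, and the A→B protocol edges following `a x ·` and its negation meet `c` in two points and
in none, so `D(c) ≥ 2` and the trivial bound `|CHSH| ≤ 4` suffices; symmetrically for B.
Otherwise the correlations factor as `ε x * δ y` with `ε, δ = ±1`, and the CHSH inequality
gives `|CHSH| ≤ 2`.
-/
def chsh (x y : Fin 2) : (EPRVertex → ℝ) →ₗ[ℝ] ℝ where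
  toFun p := (∑ x' : Fin 2, ∑ y' : Fin 2, corr x' y' p) - 2 * corr x y p
  map_add' p p' := by
    simp only [corr, Pi.add_apply, mul_add, Finset.sum_add_distrib]
    ring
  map_smul' r p := by
    simp only [corr, Pi.smul_apply, smul_eq_mul, RingHom.id_apply, Fin.sum_univ_two]
    ring

lemma bell_eq_sup'_abs_chsh (p : EPRVertex → ℝ) :
    Bell p = Finset.univ.sup' Finset.univ_nonempty fun xy : Fin 2 × Fin 2 => |chsh xy.1 xy.2 p| :=
  rfl

lemma abs_chsh_le_four {p : EPRVertex → ℝ} (hp : ∀ x y, |corr x y p| ≤ 1) (x y : Fin 2) :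
    |chsh x y p| ≤ 4 := by
  have h := fun x y => abs_le.mp (hp x y)
  simp only [chsh, LinearMap.coe_mk, AddHom.coe_mk, Fin.sum_univ_two, abs_le]
  fin_cases x <;> fin_cases y <;> simp only [Fin.zero_eta, Fin.mk_one] <;>
    constructor <;> linarith [h 0 0, h 0 1, h 1 0, h 1 1]

lemma abs_chsh_product_le_two {ε δ : Fin 2 → ℝ} (hε : ∀ x, ε x = 1 ∨ ε x = -1)
    (hδ : ∀ y, δ y = 1 ∨ δ y = -1) (x y : Fin 2) :
    |(∑ x' : Fin 2, ∑ y' : Fin 2, ε x' * δ y') - 2 * (ε x * δ y)| ≤ 2 := by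
  simp only [Fin.sum_univ_two]
  rcases hε 0 with h0 | h0 <;> rcases hε 1 with h1 | h1 <;> rcases hδ 0 with k0 | k0 <;>
    rcases hδ 1 with k1 | k1 <;> fin_cases x <;> fin_cases y <;>
    norm_num [h0, h1, k0, k1]

def detSet (a b : Fin 2 → Fin 2 → Fin 2) : Finset EPRVertex :=
  Finset.univ.image fun xy : Fin 2 × Fin 2 => (a xy.1 xy.2, b xy.1 xy.2, xy.1, xy.2)

lemma mem_detSet {a b : Fin 2 → Fin 2 → Fin 2} {v : EPRVertex} :
    v ∈ detSet a b ↔ v.1 = a v.2.2.1 v.2.2.2 ∧ v.2.1 = b v.2.2.1 v.2.2.2 := by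
  obtain ⟨a', b', x, y⟩ := v
  simp only [detSet, Finset.mem_image, Finset.mem_univ, true_and, Prod.exists, Prod.mk.injEq]
  constructor
  · rintro ⟨x, y, ha, hb, rfl, rfl⟩
    exact ⟨ha.symm, hb.symm⟩
  · rintro ⟨ha, hb⟩
    exact ⟨x, y, ha.symm, hb.symm, rfl, rfl⟩

lemma IsDetModel.exists_eq_detSet {c : Finset EPRVertex} (hc : IsDetModel c) :
    ∃ a b : Fin 2 → Fin 2 → Fin 2, c = detSet a b := by
  choose u hu using fun x y => Finset.card_eq_one.mp (hc x y)
  have mem_iff : ∀ v, v ∈ c ↔ v = u v.2.2.1 v.2.2.2 := fun v => by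
    rw [← Finset.mem_singleton, ← hu, Finset.mem_inter]
    simp [cartEdge]
  have settings : ∀ x y, (u x y).2.2.1 = x ∧ (u x y).2.2.2 = y := fun x y => by
    have := Finset.mem_singleton_self (u x y)
    rw [← hu, Finset.mem_inter] at this
    simpa [cartEdge] using this.2
  refine ⟨fun x y => (u x y).1, fun x y => (u x y).2.1, Finset.ext fun v => ?_⟩
  obtain ⟨a', b', x, y⟩ := v
  obtain ⟨hx, hy⟩ := settings x y
  rw [mem_iff, mem_detSet]
  constructor
  · intro h
    exact ⟨congrArg Prod.fst h, congrArg (·.2.1) h⟩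
  · rintro ⟨ha, hb⟩
    ext <;> simp_all

lemma corr_indicator_detSet (a b : Fin 2 → Fin 2 → Fin 2) (x y : Fin 2) :
    corr x y (indicator (detSet a b)) = (-1 : ℝ) ^ ((a x y : ℕ) + (b x y : ℕ)) := by
  simp [corr, indicator, mem_detSet, ite_and]

lemma card_detSet_inter_edgeAB (a b : Fin 2 → Fin 2 → Fin 2) (x : Fin 2) (f : Fin 2 → Fin 2) :
    (detSet a b ∩ edgeAB x f).card = (Finset.univ.filter fun y => f (a x y) = y).card := by
  have : detSet a b ∩ edgeAB x f =
      (Finset.univ.filter fun y => f (a x y) = y).image fun y => (a x y, b x y, x, y) := by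
    ext ⟨a', b', x', y'⟩
    simp only [Finset.mem_inter, mem_detSet, edgeAB, Finset.mem_filter, Finset.mem_univ,
      true_and, Finset.mem_image, Prod.mk.injEq]
    constructor
    · rintro ⟨⟨rfl, rfl⟩, rfl, hy⟩
      exact ⟨y', hy.symm, rfl, rfl, rfl, rfl⟩
    · rintro ⟨y, hy, rfl, rfl, rfl, rfl⟩
      exact ⟨⟨rfl, rfl⟩, rfl, hy.symm⟩
  rw [this, Finset.card_image_of_injective _ fun y y' h => congrArg (·.2.2.2) h]

lemma card_detSet_inter_edgeBA (a b : Fin 2 → Fin 2 → Fin 2) (y : Fin 2) (g : Fin 2 → Fin 2) :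
    (detSet a b ∩ edgeBA y g).card = (Finset.univ.filter fun x => g (b x y) = x).card := by
  have : detSet a b ∩ edgeBA y g =
      (Finset.univ.filter fun x => g (b x y) = x).image fun x => (a x y, b x y, x, y) := by
    ext ⟨a', b', x', y'⟩
    simp only [Finset.mem_inter, mem_detSet, edgeBA, Finset.mem_filter, Finset.mem_univ,
      true_and, Finset.mem_image, Prod.mk.injEq]
    constructor
    · rintro ⟨⟨rfl, rfl⟩, rfl, hx⟩
      exact ⟨x', hx.symm, rfl, rfl, rfl, rfl⟩
    · rintro ⟨x, hx, rfl, rfl, rfl, rfl⟩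
      exact ⟨⟨rfl, rfl⟩, rfl, hx.symm⟩
  rw [this, Finset.card_image_of_injective _ fun x x' h => congrArg (·.2.2.1) h]

lemma edgeAB_mem_FREdges (x : Fin 2) (f : Fin 2 → Fin 2) : edgeAB x f ∈ FREdges := by
  simp only [FREdges, Finset.mem_union, Finset.mem_image, Finset.mem_univ, true_and]
  exact Or.inl (Or.inr ⟨(x, f), rfl⟩)

lemma edgeBA_mem_FREdges (y : Fin 2) (g : Fin 2 → Fin 2) : edgeBA y g ∈ FREdges := by
  simp only [FREdges, Finset.mem_union, Finset.mem_image, Finset.mem_univ, true_and]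
  exact Or.inr ⟨(y, g), rfl⟩

lemma two_le_disturbance_of_card_inter {c e₁ e₂ : Finset EPRVertex} (he₁ : e₁ ∈ FREdges)
    (he₂ : e₂ ∈ FREdges) (h₁ : (c ∩ e₁).card = 2) (h₂ : (c ∩ e₂).card = 0) :
    2 ≤ disturbance c := by
  have hne : e₁ ≠ e₂ := by
    rintro rfl
    omega
  calc 2 = ∑ e ∈ {e₁, e₂}, (((c ∩ e).card : ℤ) - 1).natAbs := by
        rw [Finset.sum_pair hne, h₁, h₂]
        rfl
    _ ≤ disturbance c :=
        Finset.sum_le_sum_of_subset <|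
          Finset.insert_subset he₁ (Finset.singleton_subset_iff.mpr he₂)

/-- A non-constant `g : Fin 2 → Fin 2` is an involution. -/
lemma card_filter_apply_apply_eq_of_ne {g : Fin 2 → Fin 2} (hg : g 0 ≠ g 1) :
    (Finset.univ.filter fun y => g (g y) = y).card = 2 ∧
      (Finset.univ.filter fun y => g (g y) + 1 = y).card = 0 := by
  revert g
  decide

lemma two_le_disturbance_detSet_of_a_ne {a : Fin 2 → Fin 2 → Fin 2} {x : Fin 2}
    (h : a x 0 ≠ a x 1) (b : Fin 2 → Fin 2 → Fin 2) : 2 ≤ disturbance (detSet a b) := by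
  obtain ⟨h₂, h₀⟩ := card_filter_apply_apply_eq_of_ne h
  exact two_le_disturbance_of_card_inter (edgeAB_mem_FREdges x (a x))
    (edgeAB_mem_FREdges x (a x · + 1))
    (by rwa [card_detSet_inter_edgeAB]) (by rwa [card_detSet_inter_edgeAB])

lemma two_le_disturbance_detSet_of_b_ne {b : Fin 2 → Fin 2 → Fin 2} {y : Fin 2}
    (h : b 0 y ≠ b 1 y) (a : Fin 2 → Fin 2 → Fin 2) : 2 ≤ disturbance (detSet a b) := by
  obtain ⟨h₂, h₀⟩ := card_filter_apply_apply_eq_of_ne (g := (b · y)) h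
  exact two_le_disturbance_of_card_inter (edgeBA_mem_FREdges y (b · y))
    (edgeBA_mem_FREdges y (b · y + 1))
    (by rwa [card_detSet_inter_edgeBA]) (by rwa [card_detSet_inter_edgeBA])

lemma abs_chsh_indicator_detSet_le (a b : Fin 2 → Fin 2 → Fin 2) (x y : Fin 2) :
    |chsh x y (indicator (detSet a b))| ≤ 2 + disturbance (detSet a b) := by
  have of_two_le (hD : 2 ≤ disturbance (detSet a b)) : |chsh x y (indicator (detSet a b))| ≤
      2 + disturbance (detSet a b) := by
    have hD' : (2 : ℝ) ≤ disturbance (detSet a b) := by exact_mod_cast hD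
    have := abs_chsh_le_four (p := indicator (detSet a b))
      (fun _ _ => by simp [corr_indicator_detSet]) x y
    linarith
  by_cases hA : ∃ x, a x 0 ≠ a x 1
  · obtain ⟨x₀, hx₀⟩ := hA
    exact of_two_le (two_le_disturbance_detSet_of_a_ne hx₀ b)
  by_cases hB : ∃ y, b 0 y ≠ b 1 y
  · obtain ⟨y₀, hy₀⟩ := hB
    exact of_two_le (two_le_disturbance_detSet_of_b_ne hy₀ a)
  simp only [not_exists, not_not] at hA hB
  have ha : ∀ x y, a x y = a x 0 := fun x y => by fin_cases y; exacts [rfl, (hA x).symm]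
  have hb : ∀ x y, b x y = b 0 y := fun x y => by fin_cases x; exacts [rfl, (hB y).symm]
  have hcorr : ∀ x y, corr x y (indicator (detSet a b)) =
      (-1 : ℝ) ^ (a x 0 : ℕ) * (-1 : ℝ) ^ (b 0 y : ℕ) := fun x y => by
    rw [corr_indicator_detSet, ha, hb, pow_add]
  have hchsh : |chsh x y (indicator (detSet a b))| ≤ 2 := by
    simp only [chsh, LinearMap.coe_mk, AddHom.coe_mk, hcorr]
    exact abs_chsh_product_le_two (fun _ => neg_one_pow_eq_or ℝ _)
      (fun _ => neg_one_pow_eq_or ℝ _) x y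
  linarith [(Nat.cast_nonneg (disturbance (detSet a b)) : (0 : ℝ) ≤ _)]

lemma abs_chsh_indicator_le {c : Finset EPRVertex} (hc : IsDetModel c) (x y : Fin 2) :
    |chsh x y (indicator c)| ≤ 2 + disturbance c := by
  obtain ⟨a, b, rfl⟩ := hc.exists_eq_detSet
  exact abs_chsh_indicator_detSet_le a b x y

theorem bell_le_two_add_weighted_disturbance_general
    (q : Finset EPRVertex → ℝ) (p : EPRVertex → ℝ)
    (hq0 : ∀ c, 0 ≤ q c)
    (hsupp : ∀ c, q c ≠ 0 → IsDetModel c)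
    (hq1 : (∑ c : Finset EPRVertex, q c) = 1)
    (hdecomp : ∀ v, p v = ∑ c : Finset EPRVertex, q c * indicator c v) :
    Bell p ≤ 2 + ∑ c : Finset EPRVertex, q c * (disturbance c : ℝ) := by
  have hp : p = ∑ c : Finset EPRVertex, q c • indicator c := by
    ext v
    simp [hdecomp]
  have hterm (x y : Fin 2) (c : Finset EPRVertex) :
      |q c * chsh x y (indicator c)| ≤ q c * (2 + disturbance c) := by
    rcases eq_or_ne (q c) 0 with hqc | hqc
    · simp [hqc]
    · rw [abs_mul, abs_of_nonneg (hq0 c)]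
      exact mul_le_mul_of_nonneg_left (abs_chsh_indicator_le (hsupp c hqc) x y) (hq0 c)
  rw [bell_eq_sup'_abs_chsh]
  refine Finset.sup'_le _ _ fun xy _ => ?_
  calc |chsh xy.1 xy.2 p| = |∑ c : Finset EPRVertex, q c * chsh xy.1 xy.2 (indicator c)| := by
        simp [hp, map_sum]
    _ ≤ ∑ c : Finset EPRVertex, q c * (2 + disturbance c) :=
        (Finset.abs_sum_le_sum_abs _ _).trans (Finset.sum_le_sum fun c _ => hterm xy.1 xy.2 c)
    _ = 2 + ∑ c : Finset EPRVertex, q c * (disturbance c : ℝ) := by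
        simp only [mul_add, Finset.sum_add_distrib, ← Finset.sum_mul, hq1, one_mul]

/-- if a probabilistic model `p` is a convex combination of indicators of
deterministic models, then `B(p) ≤ 2 + Σ_c q_c·D(c)`: the Bell parameter minus the
total weighted disturbance never exceeds the classical bound `B₀ = 2`. -/
theorem bell_le_two_add_weighted_disturbance
    (q : Finset EPRVertex → ℝ) (p : EPRVertex → ℝ)
    (hp : IsProbModel p)
    (hq0 : ∀ c, 0 ≤ q c)
    (hsupp : ∀ c, q c ≠ 0 → IsDetModel c)
    (hq1 : (∑ c : Finset EPRVertex, q c) = 1)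
    (hdecomp : ∀ v, p v = ∑ c : Finset EPRVertex, q c * indicator c v) :
    Bell p ≤ 2 + ∑ c : Finset EPRVertex, q c * (disturbance c : ℝ) :=
  bell_le_two_add_weighted_disturbance_general q p hq0 hsupp hq1 hdecomp
end

section
/- The sets c₀ = {(0,0,0,0),(0,1,0,1),(0,0,1,0),(1,1,1,1)} and c₁ = {(1,1,0,0),(1,0,0,1),(1,1,1,0),(0,0,1,1)} are deterministic models on the EPR scenario, each of which violates the no-disturbance (ND) condition, yet the probabilistic model p = (1/2)·1_{c₀} + (1/2)·1_{c₁} satisfies the ND condition. -/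
/-- The first deterministic model in the PR-box decomposition. -/
def c₀ : Finset EPRVertex := {(0,0,0,0), (0,1,0,1), (0,0,1,0), (1,1,1,1)}

/-- The second deterministic model in the PR-box decomposition. -/
def c₁ : Finset EPRVertex := {(1,1,0,0), (1,0,0,1), (1,1,1,0), (0,0,1,1)}

/-!
In `c₀` Alice's outcome under setting `x = 1` equals Bob's setting `y`, in `c₁` it is its
negation; every other marginal is constant. So each model signals from Bob to Alice, but the two
signals are opposite and in the average (the PR box) every one-party marginal is uniform.
Marginals of indicator functions are outcome counts, so all claims reduce to finite counts.
-/

open Finset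

section Marginals

variable (c : Finset EPRVertex)

theorem sum_indicator_eq_card_fst (a x y : Fin 2) :
    ∑ b : Fin 2, indicator c (a, b, x, y) = (#{b | (a, b, x, y) ∈ c} : ℝ) := by
  simp only [indicator, sum_boole]

theorem sum_indicator_eq_card_snd (b x y : Fin 2) :
    ∑ a : Fin 2, indicator c (a, b, x, y) = (#{a | (a, b, x, y) ∈ c} : ℝ) := by
  simp only [indicator, sum_boole]

theorem isND_indicator_iff :
    IsND (indicator c) ↔
      (∀ a x : Fin 2, #{b | (a, b, x, 0) ∈ c} = #{b | (a, b, x, 1) ∈ c}) ∧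
      (∀ b y : Fin 2, #{a | (a, b, 0, y) ∈ c} = #{a | (a, b, 1, y) ∈ c}) := by
  simp only [IsND, sum_indicator_eq_card_fst, sum_indicator_eq_card_snd, Nat.cast_inj]

variable (c' : Finset EPRVertex)

theorem isND_midpoint_indicator_iff :
    IsND (fun v => (1 / 2) * indicator c v + (1 / 2) * indicator c' v) ↔
      (∀ a x : Fin 2, #{b | (a, b, x, 0) ∈ c} + #{b | (a, b, x, 0) ∈ c'} =
        #{b | (a, b, x, 1) ∈ c} + #{b | (a, b, x, 1) ∈ c'}) ∧
      (∀ b y : Fin 2, #{a | (a, b, 0, y) ∈ c} + #{a | (a, b, 0, y) ∈ c'} =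
        #{a | (a, b, 1, y) ∈ c} + #{a | (a, b, 1, y) ∈ c'}) := by
  simp only [IsND, sum_add_distrib, ← mul_sum, ← mul_add, sum_indicator_eq_card_fst,
    sum_indicator_eq_card_snd, ← Nat.cast_add, Nat.cast_inj,
    mul_right_inj' (one_div_ne_zero (two_ne_zero' ℝ))]

end Marginals

/-- `c₀` and `c₁` are deterministic models on the EPR scenario, each
violating the ND condition, yet `p = ½·1_{c₀} + ½·1_{c₁}` satisfies the ND condition. -/
theorem disturbing_det_models_average_to_nd :
    IsDetModel c₀ ∧ IsDetModel c₁ ∧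
    ¬ IsND (indicator c₀) ∧ ¬ IsND (indicator c₁) ∧
    IsND (fun v => (1 / 2) * indicator c₀ v + (1 / 2) * indicator c₁ v) := by
  refine ⟨by unfold IsDetModel; decide, by unfold IsDetModel; decide, ?_, ?_, ?_⟩
  · rw [isND_indicator_iff]; decide
  · rw [isND_indicator_iff]; decide
  · rw [isND_midpoint_indicator_iff]; decide
end
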